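/- arXiv:2410.16809 — 3 statements merged into one kernel-verified Lean document; each statement's English description precedes it below -/
import Mathlib

section
/- Let (A_i)_{i ∈ I} be a family of commutative rings and set A := ∏_{i ∈ I} A_i. Let M be a finitely presented A-module. Then the natural map M → ∏_{i ∈ I} (M ⊗_A A_i) is an isomorphism of A-modules. -/
/-!
Tensoring with a fixed module is right exact, and so is taking products, so the map
`(∏ i, N i) ⊗ M → ∏ i, (N i ⊗ M)` is natural in `M` between right exact functors. For `M = Rⁿ`
both sides are `∏ i, (N i)ⁿ`, hence for a presentation `Rᵐ → Rⁿ → M → 0` the five lemma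
gives bijectivity. The theorem is the case `N i = A i`, composed with `M ≃ A ⊗[A] M`.
-/

open TensorProduct

theorem Function.Exact.piMap {ι : Type*} {X Y Z : ι → Type*} [∀ i, Zero (Z i)]
    {f : ∀ i, X i → Y i} {g : ∀ i, Y i → Z i} (h : ∀ i, Function.Exact (f i) (g i)) :
    Function.Exact (Pi.map f) (Pi.map g) := fun y => by
  simp only [funext_iff, Pi.map_apply, Pi.zero_apply, fun i => h i (y i), Set.mem_range,
    Classical.skolem]

namespace TensorProduct

section CommSemiring

variable (R : Type*) [CommSemiring R] {ι : Type*} (N : ι → Type*) [∀ i, AddCommMonoid (N i)]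
  [∀ i, Module R (N i)] (M : Type*) [AddCommMonoid M] [Module R M]

noncomputable def piLeftHom : (∀ i, N i) ⊗[R] M →ₗ[R] ∀ i, N i ⊗[R] M :=
  LinearMap.pi fun i => (LinearMap.proj i).rTensor M

variable {R N M}

@[simp]
lemma piLeftHom_tmul (x : ∀ i, N i) (m : M) :
    piLeftHom R N M (x ⊗ₜ m) = fun i => x i ⊗ₜ m :=
  rfl

lemma piMap_lTensor_comp_piLeftHom {M' : Type*} [AddCommMonoid M'] [Module R M']
    (g : M →ₗ[R] M') :
    LinearMap.piMap (fun i => g.lTensor (N i)) ∘ₗ piLeftHom R N M =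
      piLeftHom R N M' ∘ₗ g.lTensor (∀ i, N i) := by
  ext x m i
  simp

variable (R N) in
lemma piLeftHom_bijective_of_pi (κ : Type*) [Finite κ] :
    Function.Bijective (piLeftHom R N (κ → R)) := by
  classical
  have := Fintype.ofFinite κ
  have hcomm : Pi.map (fun i => piScalarRight R R (N i) κ) ∘ piLeftHom R N (κ → R) =
      Equiv.piComm _ ∘ piScalarRight R R (∀ i, N i) κ := by
    funext z i k
    induction z using TensorProduct.induction_on <;> simp_all [Equiv.piComm_apply, Function.swap]
  rw [← (Function.Bijective.piMap fun i => (piScalarRight R R (N i) κ).bijective).of_comp_iff',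
    hcomm]
  exact (Equiv.piComm _).bijective.comp (piScalarRight R R _ κ).bijective

end CommSemiring

theorem piLeftHom_bijective {R : Type*} [CommRing R] {ι : Type*} (N : ι → Type*)
    [∀ i, AddCommGroup (N i)] [∀ i, Module R (N i)] (M : Type*) [AddCommGroup M] [Module R M]
    [Module.FinitePresentation R M] :
    Function.Bijective (piLeftHom R N M) := by
  obtain ⟨n, m, f, g, hf, hgf⟩ := Module.FinitePresentation.exists_fin' R M
  exact LinearMap.bijective_of_surjective_of_bijective_of_right_exact
    (g.lTensor (∀ i, N i)) (f.lTensor (∀ i, N i))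
    (LinearMap.piMap fun i => g.lTensor (N i)) (LinearMap.piMap fun i => f.lTensor (N i))
    (piLeftHom R N _) (piLeftHom R N _) (piLeftHom R N M)
    (piMap_lTensor_comp_piLeftHom g) (piMap_lTensor_comp_piLeftHom f)
    (lTensor_exact _ hgf hf) (Function.Exact.piMap fun i => lTensor_exact _ hgf hf)
    (piLeftHom_bijective_of_pi R N _).2 (piLeftHom_bijective_of_pi R N _)
    (LinearMap.lTensor_surjective _ hf)
    (Function.Surjective.piMap fun i => LinearMap.lTensor_surjective _ hf)

end TensorProduct

/-- Let `(A i)_{i ∈ I}` be commutative rings, `A = ∏ i, A i`, and `M` a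
finitely presented `A`-module. The natural map `M → ∏ i, (A i ⊗[A] M)`,
`m ↦ (1 ⊗ₜ m)_i`, is an isomorphism of `A`-modules (here it is asserted to be bijective,
and it is `A`-linear by construction). -/
theorem stmt5 {I : Type} (A : I → Type) [∀ i, CommRing (A i)]
    (M : Type) [AddCommGroup M] [Module ((i : I) → A i) M]
    [Module.FinitePresentation ((i : I) → A i) M] :
    letI : ∀ i, Algebra ((j : I) → A j) (A i) := fun i => (Pi.evalRingHom A i).toAlgebra
    Function.Bijective
      (LinearMap.pi
        (fun i => (TensorProduct.mk ((j : I) → A j) (A i) M) 1) :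
        M →ₗ[(i : I) → A i] ((i : I) → (A i ⊗[(j : I) → A j] M))) := by
  let _ : ∀ i, Algebra ((j : I) → A j) (A i) := fun i => (Pi.evalRingHom A i).toAlgebra
  have hfactor : LinearMap.pi (fun i => (TensorProduct.mk ((j : I) → A j) (A i) M) 1) =
      piLeftHom _ A M ∘ₗ (TensorProduct.lid ((j : I) → A j) M).symm.toLinearMap :=
    rfl
  rw [hfactor]
  exact (piLeftHom_bijective A M).comp (TensorProduct.lid _ M).symm.bijective
end

section
/- Let F be a field of characteristic ≠ 2 and h ∈ F* a nonzero element. If h is a sum of 3 squares in F, then −1 is a sum of 2 squares in the field (or étale algebra) F[√−h] = F[x]/(x² + h). -/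
/-!
If `h = a² + b² + c²` and `s² = -h` with `s ≠ 0`, then `(a/s)² + (b/s)² + (c/s)² = -1`.
Such an `s` exists in `F` itself when `-h` is a square (then map along `F → F[√-h]`), and otherwise the root of `X² + h` in
the field `F[√-h]` is one. Finally, in any field a sum of three squares equal to `-1` can be
shortened to two, since the level of a field is a power of two.
-/

open Polynomial

lemma exists_sq_add_sq_eq_neg_one_of_sum_three_sq {K : Type*} [Field K] {a b c : K}
    (h : a ^ 2 + b ^ 2 + c ^ 2 = -1) : ∃ u v : K, u ^ 2 + v ^ 2 = -1 := by
  by_cases hc : 1 + c ^ 2 = 0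
  · exact ⟨c, 0, by linear_combination hc⟩
  -- `(a² + b²)(1 + c²) = (a + bc)² + (b - ac)²` and `a² + b² = -(1 + c²)`
  · refine ⟨(a + b * c) / (1 + c ^ 2), (b - a * c) / (1 + c ^ 2), ?_⟩
    field_simp
    linear_combination (1 + c ^ 2) * h

lemma exists_sq_add_sq_eq_neg_one_of_neg_sq_eq_sum_three_sq {K : Type*} [Field K]
    {s a b c : K} (hs : s ≠ 0) (habc : -s ^ 2 = a ^ 2 + b ^ 2 + c ^ 2) :
    ∃ u v : K, u ^ 2 + v ^ 2 = -1 := by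
  refine exists_sq_add_sq_eq_neg_one_of_sum_three_sq (a := a / s) (b := b / s) (c := c / s) ?_
  field_simp
  linear_combination -habc

lemma irreducible_X_sq_add_C {K : Type*} [Field K] {h : K} (hh : ¬∃ s : K, s ^ 2 = -h) :
    Irreducible (X ^ 2 + C h) := by
  have h' : X ^ 2 + C h = X ^ 2 - C (-h) := by rw [map_neg, sub_neg_eq_add]
  exact h' ▸ X_pow_sub_C_irreducible_of_prime Nat.prime_two fun s hs ↦ hh ⟨s, hs⟩

theorem stmt6_general {F : Type} [Field F] (h : F) (hh : h ≠ 0)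
    (hsq : ∃ a b c : F, h = a ^ 2 + b ^ 2 + c ^ 2) :
    ∃ a b : AdjoinRoot (Polynomial.X ^ 2 + Polynomial.C h : Polynomial F),
      a ^ 2 + b ^ 2 = -1 := by
  obtain ⟨a, b, c, habc⟩ := hsq
  set p : F[X] := X ^ 2 + C h
  by_cases hs : ∃ s : F, s ^ 2 = -h
  · obtain ⟨s, hs⟩ := hs
    have hs0 : s ≠ 0 := by rintro rfl; simp [eq_comm, hh] at hs
    obtain ⟨u, v, huv⟩ :=
      exists_sq_add_sq_eq_neg_one_of_neg_sq_eq_sum_three_sq hs0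
      (by rw [hs, neg_neg, habc] : -s ^ 2 = a ^ 2 + b ^ 2 + c ^ 2)
    exact ⟨AdjoinRoot.of p u, AdjoinRoot.of p v, by simp only [← map_pow, ← map_add, huv, map_neg,
      map_one]⟩
  · have : Fact (Irreducible p) := ⟨irreducible_X_sq_add_C hs⟩
    have hroot : AdjoinRoot.root p ^ 2 + AdjoinRoot.of p h = 0 := by
      simpa [p] using AdjoinRoot.eval₂_root p
    have hroot0 : AdjoinRoot.root p ≠ 0 := by
      intro h0
      simp [h0, hh] at hroot
    refine exists_sq_add_sq_eq_neg_one_of_neg_sq_eq_sum_three_sq hroot0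
      (a := AdjoinRoot.of p a) (b := AdjoinRoot.of p b) (c := AdjoinRoot.of p c) ?_
    rw [neg_eq_of_add_eq_zero_right hroot, habc]
    simp only [map_add, map_pow]

/-- Let `F` be a field of characteristic `≠ 2` and `h ∈ F*`. If `h` is a
sum of 3 squares in `F`, then `−1` is a sum of 2 squares in `F[√−h] = F[x]/(x² + h)`. -/
theorem stmt6 {F : Type} [Field F] (h2 : (2 : F) ≠ 0) (h : F) (hh : h ≠ 0)
    (hsq : ∃ a b c : F, h = a ^ 2 + b ^ 2 + c ^ 2) :
    ∃ a b : AdjoinRoot (Polynomial.X ^ 2 + Polynomial.C h : Polynomial F),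
      a ^ 2 + b ^ 2 = -1 :=
  stmt6_general h hh hsq
end

section
/- Let F be a field of characteristic ≠ 2 and h ∈ F* such that −h is not a square in F. If −1 is a sum of 2 squares in the field F[√−h] = F[x]/(x² + h), then h is a sum of 3 squares in F. -/
/-!
Write `a = a₀ + a₁√-h` and `b = b₀ + b₁√-h`. Comparing coordinates in the basis `1, √-h`,
`a² + b² = -1` says `a₀² + b₀² - h(a₁² + b₁²) = -1` and `a₀a₁ + b₀b₁ = 0`. If `s = a₁² + b₁²`
vanishes, `-1` is a sum of two squares in `F`, and then every element of `F` is a sum of three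
squares. Otherwise Lagrange's identity
`(a₀² + b₀²)(a₁² + b₁²) = (a₀a₁ + b₀b₁)² + (a₀b₁ - b₀a₁)²` gives `h s² = s + (a₀b₁ - b₀a₁)²`,
and dividing by `s²` writes `h` as a sum of three squares.
-/

open Polynomial

namespace AdjoinRoot

variable {R : Type*} [CommRing R] {f : R[X]}

theorem root_X_sq_add_C_sq (h : R) : root (X ^ 2 + C h) ^ 2 = -of (X ^ 2 + C h) h := by
  have := mk_self (f := X ^ 2 + C h)
  rw [map_add, map_pow, mk_X, mk_C] at this
  exact eq_neg_of_add_eq_zero_left this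

variable [Nontrivial R]

theorem modByMonicHom_of_add_of_mul_root (hf : f.Monic) (hdeg : f.natDegree = 2) (x y : R) :
    modByMonicHom hf (of f x + of f y * root f) = C x + C y * X := by
  have hlt : (C x + C y * X).degree < f.degree := by
    rw [degree_eq_natDegree hf.ne_zero, hdeg, add_comm]
    exact degree_linear_le.trans_lt (by norm_cast)
  rw [← mk_C, ← mk_C, ← mk_X, ← map_mul, ← map_add, modByMonicHom_mk,
    (modByMonic_eq_self_iff hf).2 hlt]

theorem exists_of_add_of_mul_root_eq (hf : f.Monic) (hdeg : f.natDegree = 2)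
    (z : AdjoinRoot f) : ∃ x y : R, of f x + of f y * root f = z := by
  obtain ⟨q, rfl⟩ := mk_surjective z
  have hr : (q %ₘ f).degree ≤ 1 := by
    have := degree_modByMonic_lt q hf
    rw [degree_eq_natDegree hf.ne_zero, hdeg] at this
    exact Order.le_of_lt_succ this
  refine ⟨(q %ₘ f).coeff 0, (q %ₘ f).coeff 1, ?_⟩
  rw [← mk_leftInverse hf (mk f q), modByMonicHom_mk]
  conv_rhs => rw [eq_X_add_C_of_degree_le_one hr]
  rw [map_add, map_mul, mk_C, mk_C, mk_X, add_comm]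

theorem of_add_of_mul_root_eq_zero_iff (hf : f.Monic) (hdeg : f.natDegree = 2) {x y : R} :
    of f x + of f y * root f = 0 ↔ x = 0 ∧ y = 0 := by
  refine ⟨fun hxy => ?_, fun ⟨hx, hy⟩ => by simp [hx, hy]⟩
  have := congrArg (modByMonicHom hf) hxy
  rw [modByMonicHom_of_add_of_mul_root hf hdeg, map_zero] at this
  exact ⟨by simpa using congrArg (coeff · 0) this, by simpa using congrArg (coeff · 1) this⟩

end AdjoinRoot

-- `x = ((x + 1) / 2) ^ 2 - ((x - 1) / 2) ^ 2`, and `-1 = a ^ 2 + b ^ 2`.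
theorem exists_eq_sq_add_sq_add_sq_of_sq_add_sq_eq_neg_one {F : Type*} [Field F]
    (h2 : (2 : F) ≠ 0) {a b : F} (hab : a ^ 2 + b ^ 2 = -1) (x : F) :
    ∃ u v w : F, x = u ^ 2 + v ^ 2 + w ^ 2 :=
  ⟨(x + 1) / 2, a * (x - 1) / 2, b * (x - 1) / 2, by
    field_simp
    linear_combination (-(x - 1) ^ 2) * hab⟩

theorem exists_eq_sq_add_sq_add_sq_of_quadratic_sq_add_sq_eq_neg_one {F : Type*} [Field F]
    (h2 : (2 : F) ≠ 0) {h a₀ a₁ b₀ b₁ : F}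
    (hre : a₀ ^ 2 + b₀ ^ 2 - h * (a₁ ^ 2 + b₁ ^ 2) = -1) (him : a₀ * a₁ + b₀ * b₁ = 0) :
    ∃ u v w : F, h = u ^ 2 + v ^ 2 + w ^ 2 := by
  set s := a₁ ^ 2 + b₁ ^ 2
  by_cases hs : s = 0
  · exact exists_eq_sq_add_sq_add_sq_of_sq_add_sq_eq_neg_one h2 (a := a₀) (b := b₀)
      (by linear_combination hre + h * hs) h
  have key : h * s ^ 2 = s + (a₀ * b₁ - b₀ * a₁) ^ 2 := by
    linear_combination (-s) * hre + (a₀ * a₁ + b₀ * b₁) * him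
  refine ⟨a₁ / s, b₁ / s, (a₀ * b₁ - b₀ * a₁) / s, ?_⟩
  field_simp
  linear_combination key

open AdjoinRoot in
theorem stmt7_general {F : Type} [Field F] (h2 : (2 : F) ≠ 0) (h : F)
    (hsum : ∃ a b : AdjoinRoot (Polynomial.X ^ 2 + Polynomial.C h : Polynomial F),
      a ^ 2 + b ^ 2 = -1) :
    ∃ a b c : F, h = a ^ 2 + b ^ 2 + c ^ 2 := by
  set f : F[X] := X ^ 2 + C h
  have hmonic : f.Monic := monic_X_pow_add_C h two_ne_zero
  have hdeg : f.natDegree = 2 := natDegree_X_pow_add_C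
  obtain ⟨a, b, hab⟩ := hsum
  obtain ⟨a₀, a₁, rfl⟩ := exists_of_add_of_mul_root_eq hmonic hdeg a
  obtain ⟨b₀, b₁, rfl⟩ := exists_of_add_of_mul_root_eq hmonic hdeg b
  have hcomp : of f (a₀ ^ 2 + b₀ ^ 2 - h * (a₁ ^ 2 + b₁ ^ 2) + 1)
      + of f (2 * (a₀ * a₁ + b₀ * b₁)) * root f = 0 := by
    simp only [map_add, map_sub, map_mul, map_pow, map_one, map_ofNat]
    linear_combination hab - (of f a₁ ^ 2 + of f b₁ ^ 2) * root_X_sq_add_C_sq h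
  obtain ⟨hre, him⟩ := (of_add_of_mul_root_eq_zero_iff hmonic hdeg).1 hcomp
  exact exists_eq_sq_add_sq_add_sq_of_quadratic_sq_add_sq_eq_neg_one h2
    (eq_neg_of_add_eq_zero_left hre) ((mul_eq_zero.1 him).resolve_left h2)

/-- Let `F` be a field of characteristic `≠ 2` and `h ∈ F*` such that `−h`
is not a square in `F`. If `−1` is a sum of 2 squares in the field
`F[√−h] = F[x]/(x² + h)`, then `h` is a sum of 3 squares in `F`. -/
theorem stmt7 {F : Type} [Field F] (h2 : (2 : F) ≠ 0) (h : F) (hh : h ≠ 0)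
    (hns : ∀ t : F, t ^ 2 ≠ -h)
    (hsum : ∃ a b : AdjoinRoot (Polynomial.X ^ 2 + Polynomial.C h : Polynomial F),
      a ^ 2 + b ^ 2 = -1) :
    ∃ a b c : F, h = a ^ 2 + b ^ 2 + c ^ 2 :=
  stmt7_general h2 h hsum
end
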